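/- The set of potentials for a Markov operator T on a von Neumann algebra A is a norm-closed T-invariant cone in A₊: it is closed under addition and multiplication by nonnegative scalars, mapped into itself by T, and closed in the operator norm topology. -/

import Mathlib

open Filter Topology ContinuousLinearMap

namespace QMP

variable {H : Type*} [NormedAddCommGroup H] [InnerProductSpace ℂ H] [CompleteSpace H]

/-- `T` is a (quantum) Markov operator on the von Neumann algebra `A`:
a normal, unital, completely positive linear map leaving `A` invariant. -/
structure IsMarkov (A : VonNeumannAlgebra H) (T : (H →L[ℂ] H) → (H →L[ℂ] H)) : Prop where
  linear : IsLinearMap ℂ T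
  mapsSelf : ∀ x ∈ A, T x ∈ A
  unital : T 1 = 1
  cp : ∀ (n : ℕ) (a b : Fin n → (H →L[ℂ] H)),
    0 ≤ ∑ i : Fin n, ∑ j : Fin n, star (b i) * T (star (a i) * a j) * b j
  normal : ∀ {ι : Type} [Preorder ι] [IsDirected ι (· ≤ ·)] (f : ι → (H →L[ℂ] H))
    (y : H →L[ℂ] H), Monotone f → IsLUB (Set.range f) y →
      IsLUB (Set.range fun i => T (f i)) (T y)

/-- `y = ∑ₙ Tⁿ x` with convergence in the strong operator topology. -/
def SOTSum (T : (H →L[ℂ] H) → (H →L[ℂ] H)) (x y : H →L[ℂ] H) : Prop :=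
  ∀ η : H, Tendsto (fun N => ∑ n ∈ Finset.range N, (T^[n] x) η) atTop (𝓝 (y η))

/-- `x ∈ A₊` is `T`-summable: `∑ₙ Tⁿ x` converges strongly to an element of `A₊`. -/
def TSummable (A : VonNeumannAlgebra H) (T : (H →L[ℂ] H) → (H →L[ℂ] H))
    (x : H →L[ℂ] H) : Prop :=
  x ∈ A ∧ 0 ≤ x ∧ ∃ y, y ∈ A ∧ 0 ≤ y ∧ SOTSum T x y

/-- `y` is a potential for `T`: `y = ∑ₙ Tⁿ x` for some `x ∈ A₊`. -/
def IsPotential (A : VonNeumannAlgebra H) (T : (H →L[ℂ] H) → (H →L[ℂ] H))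
    (y : H →L[ℂ] H) : Prop :=
  y ∈ A ∧ 0 ≤ y ∧ ∃ x, x ∈ A ∧ 0 ≤ x ∧ SOTSum T x y

/-- `p` is an orthogonal projection belonging to `A`. -/
def IsProj (A : VonNeumannAlgebra H) (p : H →L[ℂ] H) : Prop :=
  p ∈ A ∧ IsSelfAdjoint p ∧ IsIdempotentElem p

/-- `p` is the support projection of the self-adjoint element `a`. -/
def IsSupport (A : VonNeumannAlgebra H) (a p : H →L[ℂ] H) : Prop :=
  IsProj A p ∧ a = p * a * p ∧ ∀ q, IsProj A q → a = q * a * q → p ≤ q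

/-- `s` is the supremum of the family of projections `q` in the projection lattice of `A`. -/
def IsProjSup (A : VonNeumannAlgebra H) {ι : Type*} (q : ι → (H →L[ℂ] H))
    (s : H →L[ℂ] H) : Prop :=
  IsProj A s ∧ (∀ i, q i ≤ s) ∧ ∀ r, IsProj A r → (∀ i, q i ≤ r) → s ≤ r

end QMP

open QMP

/-!
If `y = ∑ₙ Tⁿ x` strongly with `x ≥ 0`, the partial sums increase to `y`, so normality of `T`
gives `T y = ∑ₙ Tⁿ⁺¹ x = y - x`. Hence the charge of a potential is `y - T y`, and by telescoping
`y ∈ A₊` is a potential iff `T y ≤ y` and `Tⁿ y → 0` strongly. These conditions are visibly stable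
under sums, nonnegative multiples and `T`. They are also norm-closed: positive maps of
C⋆-algebras are bounded, and as every `Tⁿ` is positive and unital, `‖Tⁿ a‖ ≤ 4 ‖a‖`, so the
maps `y ↦ Tⁿ y η` are equi-Lipschitz and the set where they tend to `0` is closed.
-/

open scoped ComplexOrder

namespace PositiveLinearMap

variable {B₁ B₂ : Type*} [CStarAlgebra B₁] [CStarAlgebra B₂] [PartialOrder B₁] [PartialOrder B₂]
  [StarOrderedRing B₁] [StarOrderedRing B₂]

lemma norm_apply_le_four_mul (f : B₁ →ₚ[ℂ] B₂) (a : B₁) : ‖f a‖ ≤ 4 * ‖f 1‖ * ‖a‖ := by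
  obtain ⟨b, hb_nonneg, hb_norm, hb⟩ := CStarAlgebra.exists_sum_four_nonneg a
  calc ‖f a‖ = ‖∑ i : Fin 4, Complex.I ^ (i : ℕ) • f (b i)‖ := by
        rw [hb, map_sum]; simp only [map_smul]
    _ ≤ ∑ _i : Fin 4, ‖f 1‖ * ‖a‖ := norm_sum_le_of_le _ fun i _ => by
        rw [norm_smul, norm_pow, Complex.norm_I, one_pow, one_mul]
        exact (f.norm_apply_le_of_nonneg _ (hb_nonneg i)).trans (by gcongr; exact hb_norm i)
    _ = 4 * ‖f 1‖ * ‖a‖ := by simp [mul_assoc]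

end PositiveLinearMap

namespace ContinuousLinearMap

variable {H : Type*} [NormedAddCommGroup H] [InnerProductSpace ℂ H]

lemma nonneg_iff_forall_inner_nonneg (a : H →L[ℂ] H) : 0 ≤ a ↔ ∀ x, 0 ≤ inner ℂ (a x) x := by
  simp [nonneg_iff_isPositive, isPositive_iff_complex, Complex.nonneg_iff, Complex.ext_iff,
    forall_and, eq_comm, and_comm]

lemma le_iff_forall_inner_le (a b : H →L[ℂ] H) :
    a ≤ b ↔ ∀ x, inner ℂ (a x) x ≤ inner ℂ (b x) x := by
  rw [le_def, ← nonneg_iff_isPositive, nonneg_iff_forall_inner_nonneg]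
  simp only [sub_apply, inner_sub_left, sub_nonneg]

lemma isLUB_range_of_tendsto_apply {ι : Type*} [SemilatticeSup ι] [Nonempty ι]
    {f : ι → H →L[ℂ] H} {g : H →L[ℂ] H} (hf : Monotone f)
    (h : ∀ x, Tendsto (fun i => f i x) atTop (𝓝 (g x))) : IsLUB (Set.range f) g := by
  have hform : ∀ x, Tendsto (fun i => inner ℂ (f i x) x) atTop (𝓝 (inner ℂ (g x) x)) :=
    fun x => (h x).inner tendsto_const_nhds
  refine ⟨?_, fun b hb => ?_⟩
  · rintro _ ⟨i, rfl⟩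
    refine (le_iff_forall_inner_le _ _).2 fun x => Monotone.ge_of_tendsto ?_ (hform x) i
    exact fun i j hij => (le_iff_forall_inner_le _ _).1 (hf hij) x
  · refine (le_iff_forall_inner_le _ _).2 fun x => le_of_tendsto' (hform x) fun i => ?_
    exact (le_iff_forall_inner_le _ _).1 (hb ⟨i, rfl⟩) x

end ContinuousLinearMap

namespace QMP

variable {H : Type*} [NormedAddCommGroup H] [InnerProductSpace ℂ H] [CompleteSpace H]
  {A : VonNeumannAlgebra H} {T : (H →L[ℂ] H) → (H →L[ℂ] H)}

namespace IsMarkov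

lemma map_nonneg (hT : IsMarkov A T) {a : H →L[ℂ] H} (ha : 0 ≤ a) : 0 ≤ T a := by
  obtain ⟨s, rfl⟩ := CStarAlgebra.nonneg_iff_eq_star_mul_self.1 ha
  simpa using hT.cp 1 (fun _ => s) (fun _ => 1)

noncomputable def toPositiveLinearMap (hT : IsMarkov A T) : (H →L[ℂ] H) →ₚ[ℂ] (H →L[ℂ] H) :=
  .mk₀ (IsLinearMap.mk' T hT.linear) fun _ => hT.map_nonneg

noncomputable def iterate (hT : IsMarkov A T) : ℕ → (H →L[ℂ] H) →ₚ[ℂ] (H →L[ℂ] H)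
  | 0 => .id ℂ _
  | n + 1 => hT.toPositiveLinearMap.comp (hT.iterate n)

lemma coe_iterate (hT : IsMarkov A T) (n : ℕ) : ⇑(hT.iterate n) = T^[n] := by
  induction n with
  | zero => rfl
  | succ n ih =>
    rw [Function.iterate_succ', ← ih]
    rfl

lemma iterate_nonneg (hT : IsMarkov A T) (n : ℕ) {a : H →L[ℂ] H} (ha : 0 ≤ a) :
    0 ≤ T^[n] a := by
  rw [← hT.coe_iterate]
  exact (hT.iterate n).map_nonneg ha

lemma iterate_map_add (hT : IsMarkov A T) (n : ℕ) (a b : H →L[ℂ] H) :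
    T^[n] (a + b) = T^[n] a + T^[n] b := by
  rw [← hT.coe_iterate]
  exact map_add _ a b

lemma iterate_map_sub (hT : IsMarkov A T) (n : ℕ) (a b : H →L[ℂ] H) :
    T^[n] (a - b) = T^[n] a - T^[n] b := by
  rw [← hT.coe_iterate]
  exact map_sub _ a b

lemma iterate_map_smul (hT : IsMarkov A T) (n : ℕ) (c : ℝ) (a : H →L[ℂ] H) :
    T^[n] (c • a) = c • T^[n] a := by
  rw [← hT.coe_iterate]
  exact (hT.iterate n).map_smul_of_tower c a

lemma norm_iterate_apply_le (hT : IsMarkov A T) (n : ℕ) (a : H →L[ℂ] H) :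
    ‖T^[n] a‖ ≤ 4 * ‖a‖ := by
  have h := (hT.iterate n).norm_apply_le_four_mul a
  rw [coe_iterate, Function.iterate_fixed hT.unital] at h
  exact h.trans (by gcongr; exact mul_le_of_le_one_right (by norm_num) norm_id_le)

lemma lipschitzWith_iterate (hT : IsMarkov A T) (n : ℕ) : LipschitzWith 4 T^[n] :=
  LipschitzWith.of_dist_le_mul fun a b => by
    simpa [dist_eq_norm, ← hT.iterate_map_sub] using hT.norm_iterate_apply_le n (a - b)

lemma sum_range_iterate_sub_map (hT : IsMarkov A T) (y : H →L[ℂ] H) (N : ℕ) :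
    ∑ n ∈ Finset.range N, T^[n] (y - T y) = y - T^[N] y := by
  have h : ∀ n, T^[n] (y - T y) = T^[n] y - T^[n + 1] y := fun n => by
    rw [hT.iterate_map_sub, ← Function.iterate_succ_apply]
  simp_rw [h]
  exact Finset.sum_range_sub' _ N

lemma sub_map_eq_of_sotSum (hT : IsMarkov A T) {x y : H →L[ℂ] H} (hx : 0 ≤ x)
    (hxy : SOTSum T x y) : y - T y = x := by
  set S : ℕ → H →L[ℂ] H := fun N => ∑ n ∈ Finset.range N, T^[n] x with hS_def
  have hS : ∀ η, Tendsto (fun N => S N η) atTop (𝓝 (y η)) := fun η => by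
    simpa only [hS_def, sum_apply] using hxy η
  have hS_mono : Monotone S := monotone_nat_of_le_succ fun N => by
    simpa [hS_def, Finset.sum_range_succ] using hT.iterate_nonneg N hx
  have hTS : ∀ N, T (S N) = S (N + 1) - x := fun N => by
    have hT_sum : T (S N) = ∑ n ∈ Finset.range N, T (T^[n] x) :=
      map_sum hT.toPositiveLinearMap _ _
    rw [hT_sum]
    simp only [hS_def, Finset.sum_range_succ', Function.iterate_succ_apply',
      Function.iterate_zero_apply, add_sub_cancel_right]
  have hT_lub : IsLUB (Set.range fun N => T (S N)) (T y) :=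
    hT.normal S y hS_mono (isLUB_range_of_tendsto_apply hS_mono hS)
  have h_lub : IsLUB (Set.range fun N => T (S N)) (y - x) := by
    simp_rw [hTS]
    refine isLUB_range_of_tendsto_apply (fun m n h => sub_le_sub_right (hS_mono (by omega)) x)
      fun η => ?_
    simpa using ((hS η).comp (tendsto_add_atTop_nat 1)).sub_const (x η)
  rw [hT_lub.unique h_lub, sub_sub_cancel]

lemma sotSum_sub_map_iff (hT : IsMarkov A T) (y : H →L[ℂ] H) :
    SOTSum T (y - T y) y ↔ ∀ η, Tendsto (fun n => T^[n] y η) atTop (𝓝 0) := by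
  simp only [SOTSum, ← sum_apply, hT.sum_range_iterate_sub_map, sub_apply]
  refine forall_congr' fun η => ⟨fun h => ?_, fun h => ?_⟩ <;>
    simpa using (tendsto_const_nhds (x := y η)).sub h

theorem isPotential_iff (hT : IsMarkov A T) {y : H →L[ℂ] H} :
    IsPotential A T y ↔
      y ∈ A ∧ 0 ≤ y ∧ T y ≤ y ∧ ∀ η, Tendsto (fun n => T^[n] y η) atTop (𝓝 0) := by
  constructor
  · rintro ⟨hyA, hy, x, -, hx, hxy⟩
    have hx_eq := hT.sub_map_eq_of_sotSum hx hxy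
    exact ⟨hyA, hy, sub_nonneg.1 (hx_eq ▸ hx), (hT.sotSum_sub_map_iff y).1 (hx_eq ▸ hxy)⟩
  · rintro ⟨hyA, hy, hTy, hlim⟩
    exact ⟨hyA, hy, y - T y, sub_mem hyA (hT.mapsSelf y hyA), sub_nonneg.2 hTy,
      (hT.sotSum_sub_map_iff y).2 hlim⟩

theorem isClosed_setOf_isPotential (hT : IsMarkov A T) : IsClosed {y | IsPotential A T y} := by
  simp only [hT.isPotential_iff, Set.ofPred_and, Set.ofPred_forall]
  have hA : IsClosed (A : Set (H →L[ℂ] H)) := by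
    rw [← A.centralizer_centralizer]
    exact Set.isClosed_centralizer _
  have hT_cont : Continuous T := map_continuous hT.toPositiveLinearMap
  refine hA.inter <| isClosed_Ici.inter <| (isClosed_le hT_cont continuous_id).inter <|
    isClosed_iInter fun η => ?_
  have hlip : ∀ n, LipschitzWith _ fun y => T^[n] y η := fun n =>
    (lipschitz (apply ℂ H η)).comp (hT.lipschitzWith_iterate n)
  exact (LipschitzWith.uniformEquicontinuous _ _ hlip).equicontinuous.isClosed_setOfPred_tendsto
    continuous_const

end IsMarkov

namespace IsPotential

variable {y z : H →L[ℂ] H}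

lemma add (hT : IsMarkov A T) (hy : IsPotential A T y) (hz : IsPotential A T z) :
    IsPotential A T (y + z) := by
  rw [hT.isPotential_iff] at *
  obtain ⟨hyA, hy, hTy, hy_lim⟩ := hy
  obtain ⟨hzA, hz, hTz, hz_lim⟩ := hz
  refine ⟨add_mem hyA hzA, add_nonneg hy hz, ?_, fun η => ?_⟩
  · calc T (y + z) = T y + T z := hT.linear.map_add y z
      _ ≤ y + z := add_le_add hTy hTz
  · simpa only [hT.iterate_map_add, add_apply, add_zero] using (hy_lim η).add (hz_lim η)

lemma smul (hT : IsMarkov A T) {c : ℝ} (hc : 0 ≤ c) (hy : IsPotential A T y) :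
    IsPotential A T (c • y) := by
  rw [hT.isPotential_iff] at *
  obtain ⟨hyA, hy, hTy, hy_lim⟩ := hy
  refine ⟨?_, smul_nonneg hc hy, ?_, fun η => ?_⟩
  · rw [← Complex.coe_smul]
    exact A.smul_mem hyA c
  · calc T (c • y) = c • T y := hT.toPositiveLinearMap.map_smul_of_tower c y
      _ ≤ c • y := smul_le_smul_of_nonneg_left hTy hc
  · simpa only [hT.iterate_map_smul, smul_apply, smul_zero] using (hy_lim η).const_smul c

lemma map (hT : IsMarkov A T) (hy : IsPotential A T y) : IsPotential A T (T y) := by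
  rw [hT.isPotential_iff] at *
  obtain ⟨hyA, hy, hTy, hy_lim⟩ := hy
  refine ⟨hT.mapsSelf y hyA, hT.map_nonneg hy, ?_, fun η => ?_⟩
  · exact OrderHomClass.mono hT.toPositiveLinearMap hTy
  · simpa only [Function.comp_def, Function.iterate_succ_apply] using
      (hy_lim η).comp (tendsto_add_atTop_nat 1)

end IsPotential

end QMP

/-- The set of potentials for a Markov operator is a norm-closed `T`-invariant cone in `A₊`:
closed under addition, nonnegative scalar multiples, invariant under `T`, and norm-closed. -/
theorem potentials_norm_closed_invariant_cone
    {H : Type*} [NormedAddCommGroup H] [InnerProductSpace ℂ H] [CompleteSpace H]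
    (A : VonNeumannAlgebra H) (T : (H →L[ℂ] H) → (H →L[ℂ] H)) (hT : IsMarkov A T) :
    (∀ y z, IsPotential A T y → IsPotential A T z → IsPotential A T (y + z)) ∧
    (∀ (c : ℝ), 0 ≤ c → ∀ y, IsPotential A T y → IsPotential A T (c • y)) ∧
    (∀ y, IsPotential A T y → IsPotential A T (T y)) ∧
    IsClosed {y : H →L[ℂ] H | IsPotential A T y} :=
  ⟨fun _ _ => .add hT, fun _ hc _ => .smul hT hc, fun _ => .map hT,
    hT.isClosed_setOf_isPotential⟩
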